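/- Consider the function D(η) = 2/3 − L(η) on [0, ∞), where L(η) = ((2 − π/2) η + √(2π)(1 − log 2 − π/12)) / (η + √(π/2))³. Then D(0) = 1 − 4(1 − log 2)/π, and D has a unique global minimizer on [0, ∞), located at η* = √(2π)(log 8 − 2)/(4 − π); that is, D(η*) ≤ D(η) for all η ≥ 0, with equality only at η = η*. -/

import Mathlib

open Real

noncomputable def Lfun (η : ℝ) : ℝ :=
  ((2 - Real.pi / 2) * η + Real.sqrt (2 * Real.pi) * (1 - Real.log 2 - Real.pi / 12)) /
    (η + Real.sqrt (Real.pi / 2)) ^ 3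

noncomputable def Dfun (η : ℝ) : ℝ := 2 / 3 - Lfun η

noncomputable def ηstar : ℝ := Real.sqrt (2 * Real.pi) * (Real.log 8 - 2) / (4 - Real.pi)

/-!
With `c = √(π/2)` one has `√(2π) = 2c`, so `L(η) = (a η + b) / (η + c)³` with `a = 2 - π/2 > 0` and
`b = 2c(1 - log 2 - π/12)`. For such a rational function the critical point `s` solves
`2 a s = a c - 3 b`, and `L(s) - L(x)` factors as `(x - s)² (a (x + c) - 3 (b - a c))` over a
positive denominator. The last factor is positive for `x + c > 0` as soon as `b ≤ a c`, which here
amounts to `π ≤ 6 log 2`. So `L` has a strict global maximum at `s = η*`, and `D = 2/3 - L` a strict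
global minimum there.
-/

noncomputable def cubicRatio (a b c x : ℝ) : ℝ := (a * x + b) / (x + c) ^ 3

section cubicRatio

variable {a b c s x : ℝ}

theorem cubicRatio_sub_cubicRatio (hs : 2 * a * s = a * c - 3 * b)
    (hsc : s + c ≠ 0) (hxc : x + c ≠ 0) :
    cubicRatio a b c s - cubicRatio a b c x =
      (x - s) ^ 2 * (a * (x + c) - 3 * (b - a * c)) / (3 * (s + c) ^ 2 * (x + c) ^ 3) := by
  have hnum : (a * s + b) * (x + c) ^ 3 - (s + c) ^ 3 * (a * x + b) =
      (x - s) ^ 2 * (s + c) * (a * (x + c) - 3 * (b - a * c)) / 3 := by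
    linear_combination ((x + c) ^ 3 - (s + c) ^ 3 + (s + c) * (x - s) ^ 2) / 3 * hs
  rw [cubicRatio, cubicRatio, div_sub_div _ _ (pow_ne_zero 3 hsc) (pow_ne_zero 3 hxc), hnum]
  field_simp

theorem cubicRatio_lt_of_crit (ha : 0 < a) (hb : b ≤ a * c) (hs : 2 * a * s = a * c - 3 * b)
    (hsc : s + c ≠ 0) (hxc : 0 < x + c) (hxs : x ≠ s) :
    cubicRatio a b c x < cubicRatio a b c s := by
  have hfactor : 0 < a * (x + c) - 3 * (b - a * c) := by nlinarith [mul_pos ha hxc]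
  rw [← sub_pos, cubicRatio_sub_cubicRatio hs hsc hxc.ne']
  exact div_pos (mul_pos (sq_pos_of_ne_zero (sub_ne_zero.2 hxs)) hfactor)
    (mul_pos (mul_pos three_pos (sq_pos_of_ne_zero hsc)) (pow_pos hxc 3))

end cubicRatio

theorem sqrt_two_mul_pi : √(2 * π) = 2 * √(π / 2) := by
  rw [show 2 * π = 2 ^ 2 * (π / 2) by ring, sqrt_mul (by positivity), sqrt_sq zero_le_two]

theorem Lfun_eq_cubicRatio (η : ℝ) :
    Lfun η = cubicRatio (2 - π / 2) (2 * √(π / 2) * (1 - log 2 - π / 12)) √(π / 2) η := by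
  rw [Lfun, cubicRatio, sqrt_two_mul_pi]

theorem ηstar_eq : ηstar = √(π / 2) * (6 * log 2 - 4) / (4 - π) := by
  rw [ηstar, sqrt_two_mul_pi, show (8 : ℝ) = 2 ^ 3 by norm_num, log_pow]
  push_cast
  ring

theorem two_mul_ηstar_crit :
    2 * (2 - π / 2) * ηstar =
      (2 - π / 2) * √(π / 2) - 3 * (2 * √(π / 2) * (1 - log 2 - π / 12)) := by
  have : 4 - π ≠ 0 := by linarith [pi_lt_four]
  rw [ηstar_eq]
  field_simp
  ring

theorem Lfun_lt_Lfun_ηstar {η : ℝ} (hη : 0 ≤ η) (hne : η ≠ ηstar) : Lfun η < Lfun ηstar := by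
  have hπ := pi_lt_four
  have hlog := log_two_gt_d9
  have hc : 0 < √(π / 2) := by positivity
  have hs : 0 ≤ ηstar := by
    rw [ηstar_eq]
    exact div_nonneg (mul_nonneg hc.le (by linarith)) (by linarith)
  rw [Lfun_eq_cubicRatio, Lfun_eq_cubicRatio]
  refine cubicRatio_lt_of_crit (by linarith) ?_ two_mul_ηstar_crit (by positivity)
    (by positivity) hne
  have hπ_le : π ≤ 6 * log 2 := by linarith
  linarith [mul_le_mul_of_nonneg_left hπ_le hc.le]

theorem Dfun_zero : Dfun 0 = 1 - 4 * (1 - log 2) / π := by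
  have hc2 : √(π / 2) ^ 2 = π / 2 := sq_sqrt (by positivity)
  have hc : 0 < √(π / 2) := by positivity
  rw [Dfun, Lfun_eq_cubicRatio, cubicRatio, zero_add, pow_succ, hc2]
  field_simp
  ring

theorem Dfun_ηstar_lt_Dfun {η : ℝ} (hη : 0 ≤ η) (hne : η ≠ ηstar) : Dfun ηstar < Dfun η :=
  sub_lt_sub_left (Lfun_lt_Lfun_ηstar hη hne) _

theorem Dfun_value_and_unique_minimizer :
    Dfun 0 = 1 - 4 * (1 - Real.log 2) / Real.pi ∧
    (∀ η : ℝ, 0 ≤ η → Dfun ηstar ≤ Dfun η) ∧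
    (∀ η : ℝ, 0 ≤ η → Dfun η = Dfun ηstar → η = ηstar) := by
  refine ⟨Dfun_zero, fun η hη => ?_, fun η hη heq => ?_⟩
  · rcases eq_or_ne η ηstar with rfl | hne
    · exact le_rfl
    · exact (Dfun_ηstar_lt_Dfun hη hne).le
  · by_contra hne
    exact (Dfun_ηstar_lt_Dfun hη hne).ne' heq
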